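/- arXiv:math/0401203 — 2 statements merged into one kernel-verified Lean document; each statement's English description precedes it below -/
import Mathlib

section
/- Let i_1, …, i_p ∈ I be indices lying in pairwise distinct orbits of the cyclic group ⟨σ⟩ on I. Then for every x ∈ V one has s_{i_1}(s_{i_2}(⋯ s_{i_p}(τ(x)) ⋯)) = x if and only if τ(x) = x and s_{i_j}(x) = x for every j ∈ {1, …, p}. -/
lemma fold_succ_aux {V I : Type*} (s : I → V → V) (p : ℕ) (idx : Fin (p+1) → I) (x : V) :
    ((List.ofFn fun j : Fin (p+1) => s (idx j)).foldr (· ∘ ·) id) x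
      = s (idx 0) (((List.ofFn fun j : Fin p => s (idx j.succ)).foldr (· ∘ ·) id) x) := by
  rw [List.ofFn_succ]
  rfl

lemma exists_coeffs_aux {V : Type*} [AddCommGroup V] [Module ℂ V] {I : Type*}
    (αv : I → V) (α : I → (V →ₗ[ℂ] ℂ)) (s : I → V → V)
    (hs : ∀ i x, s i x = x - α i x • αv i) :
    ∀ (p : ℕ) (idx : Fin p → I) (x : V),
      ∃ c : Fin p → ℂ,
        ((List.ofFn fun j : Fin p => s (idx j)).foldr (· ∘ ·) id) x
          = x + ∑ j, c j • αv (idx j) := by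
  intro p
  induction p with
  | zero => intro idx x; exact ⟨0, by simp⟩
  | succ p ih =>
    intro idx x
    obtain ⟨c, hc⟩ := ih (fun j => idx j.succ) x
    refine ⟨Fin.cons (-(α (idx 0) (x + ∑ j : Fin p, c j • αv (idx j.succ)))) c, ?_⟩
    rw [fold_succ_aux, hs, hc, Fin.sum_univ_succ, Fin.cons_zero]
    simp only [Fin.cons_succ]
    module

lemma fold_fixed_aux {V I : Type*} (s : I → V → V) :
    ∀ (p : ℕ) (idx : Fin p → I) (x : V), (∀ j, s (idx j) x = x) →
      ((List.ofFn fun j : Fin p => s (idx j)).foldr (· ∘ ·) id) x = x := by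
  intro p
  induction p with
  | zero => intro idx x _; simp
  | succ p ih =>
    intro idx x h
    rw [fold_succ_aux, ih (fun j => idx j.succ) x (fun j => h j.succ)]
    exact h 0

lemma fixed_of_fold_fixed_aux {V : Type*} [AddCommGroup V] [Module ℂ V] {I : Type*}
    (αv : I → V) (α : I → (V →ₗ[ℂ] ℂ))
    (hli : LinearIndependent ℂ αv)
    (s : I → V → V) (hs : ∀ i x, s i x = x - α i x • αv i) :
    ∀ (p : ℕ) (idx : Fin p → I), Function.Injective idx →
      ∀ x : V, ((List.ofFn fun j : Fin p => s (idx j)).foldr (· ∘ ·) id) x = x →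
      ∀ j : Fin p, s (idx j) x = x := by
  intro p
  induction p with
  | zero => intro idx _ x _ j; exact j.elim0
  | succ p ih =>
    intro idx hinj x hx
    obtain ⟨c, hc⟩ := exists_coeffs_aux αv α s hs p (fun j => idx j.succ) x
    rw [fold_succ_aux, hs, hc] at hx
    set t := α (idx 0) (x + ∑ j : Fin p, c j • αv (idx j.succ)) with ht
    -- hx : x + ∑ c j • αv (idx j.succ) - t • αv (idx 0) = x
    have hli' : LinearIndependent ℂ (αv ∘ idx) := hli.comp idx hinj
    have hzero : ∑ j : Fin (p+1), (Fin.cons (-t) c : Fin (p+1) → ℂ) j • (αv ∘ idx) j = 0 := by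
      rw [Fin.sum_univ_succ, Fin.cons_zero]
      simp only [Fin.cons_succ, Function.comp]
      linear_combination (norm := module) hx
    have hall := Fintype.linearIndependent_iff.mp hli' _ hzero
    have ht0 : t = 0 := by have := hall 0; rw [Fin.cons_zero, neg_eq_zero] at this; exact this
    have hcz : ∀ j : Fin p, c j = 0 := fun j => by
      have := hall j.succ; rwa [Fin.cons_succ] at this
    have hsum0 : (∑ j : Fin p, c j • αv (idx j.succ)) = 0 := by simp [hcz]
    have hfold : ((List.ofFn fun j : Fin p => s (idx j.succ)).foldr (· ∘ ·) id) x = x := by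
      rw [hc, hsum0, add_zero]
    have hinj' : Function.Injective (fun j : Fin p => idx j.succ) :=
      fun a b hab => Fin.succ_injective _ (hinj hab)
    intro j
    refine Fin.cases ?_ ?_ j
    · rw [hs]
      have hax : α (idx 0) x = 0 := by
        rw [ht, hsum0, add_zero] at ht0; exact ht0
      rw [hax]; simp
    · intro j'
      exact ih (fun j => idx j.succ) hinj' x hfold j'


/-- Let `V` be a complex vector space, `(α̌ᵢ)` a linearly independent family,
`(αᵢ)` linear forms with `αᵢ(α̌ᵢ) = 2`, `sᵢ(x) = x - αᵢ(x)·α̌ᵢ`, `σ` a permutation of `I`, and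
`τ` a linear automorphism with `τ(α̌ᵢ) = α̌_{σ i}`, `τ^N = 1`, `σ^N = 1`, `N ≥ 1`.
If `i₁, …, i_p` lie in pairwise distinct `⟨σ⟩`-orbits, then
`s_{i₁}(s_{i₂}(⋯ s_{i_p}(τ x) ⋯)) = x ↔ (τ x = x ∧ ∀ j, s_{i_j} x = x)`. -/
theorem twisted_coxeter_partial_fixed_points
    {V : Type*} [AddCommGroup V] [Module ℂ V]
    {I : Type*} [Fintype I]
    (αv : I → V) (α : I → (V →ₗ[ℂ] ℂ))
    (hli : LinearIndependent ℂ αv)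
    (hpair : ∀ i, α i (αv i) = 2)
    (s : I → V → V) (hs : ∀ i x, s i x = x - α i x • αv i)
    (σ : Equiv.Perm I) (τ : V ≃ₗ[ℂ] V)
    (hτ : ∀ i, τ (αv i) = αv (σ i))
    (N : ℕ) (hN : 1 ≤ N) (hτN : τ ^ N = 1) (hσN : σ ^ N = 1)
    (p : ℕ) (idx : Fin p → I)
    (hdist : ∀ j k : Fin p, j ≠ k → ∀ n : ℕ, (σ ^ n) (idx j) ≠ idx k)
    (x : V) :
    ((List.ofFn fun j : Fin p => s (idx j)).foldr (· ∘ ·) id) (τ x) = x ↔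
      (τ x = x ∧ ∀ j : Fin p, s (idx j) x = x) := by
  classical
  constructor
  · intro h
    obtain ⟨c, hc⟩ := exists_coeffs_aux αv α s hs p idx (τ x)
    rw [hc] at h
    -- h : τ x + ∑ j, c j • αv (idx j) = x
    have hτpow : ∀ (m : ℕ) (i : I), (τ ^ m) (αv i) = αv ((σ ^ m) i) := by
      intro m
      induction m with
      | zero => intro i; simp
      | succ m ihm =>
        intro i
        rw [pow_succ, pow_succ]
        have h1 : (τ ^ m * τ) (αv i) = (τ ^ m) (τ (αv i)) := rfl
        have h2 : (σ ^ m * σ) i = (σ ^ m) (σ i) := rfl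
        rw [h1, h2, hτ, ihm]
    have htel : ∑ m ∈ Finset.range N, (τ ^ m) (τ x - x) = 0 := by
      have : ∀ m : ℕ, (τ ^ m) (τ x - x) = (τ ^ (m+1)) x - (τ ^ m) x := by
        intro m
        rw [map_sub, pow_succ]
        rfl
      rw [Finset.sum_congr rfl fun m _ => this m, Finset.sum_range_sub (fun m => (τ ^ m) x) N,
        hτN, pow_zero]
      simp
    have hsum2 : ∑ m ∈ Finset.range N, ∑ j : Fin p, c j • αv ((σ ^ m) (idx j)) = 0 := by
      have hterm : ∀ m, (τ ^ m) (∑ j : Fin p, c j • αv (idx j))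
          = ∑ j : Fin p, c j • αv ((σ ^ m) (idx j)) := by
        intro m
        rw [map_sum]
        exact Finset.sum_congr rfl fun j _ => by rw [map_smul, hτpow]
      have hdiff : τ x - x = -(∑ j : Fin p, c j • αv (idx j)) := by
        linear_combination (norm := module) h
      calc ∑ m ∈ Finset.range N, ∑ j : Fin p, c j • αv ((σ ^ m) (idx j))
          = ∑ m ∈ Finset.range N, (τ ^ m) (∑ j : Fin p, c j • αv (idx j)) :=
            (Finset.sum_congr rfl fun m _ => (hterm m).symm)
        _ = -∑ m ∈ Finset.range N, (τ ^ m) (τ x - x) := by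
            rw [← Finset.sum_neg_distrib]
            refine Finset.sum_congr rfl fun m _ => ?_
            rw [hdiff, map_neg, neg_neg]
        _ = 0 := by rw [htel, neg_zero]
    set g : I → ℂ := fun i => ∑ m ∈ Finset.range N, ∑ j : Fin p,
      if (σ ^ m) (idx j) = i then c j else 0 with hgdef
    have hg : ∑ i, g i • αv i = 0 := by
      have heq : ∑ i, g i • αv i
          = ∑ m ∈ Finset.range N, ∑ j : Fin p, c j • αv ((σ ^ m) (idx j)) := by
        simp only [hgdef, Finset.sum_smul, ite_smul, zero_smul]
        rw [Finset.sum_comm]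
        refine Finset.sum_congr rfl fun m _ => ?_
        rw [Finset.sum_comm]
        refine Finset.sum_congr rfl fun j _ => ?_
        simp
      rw [heq, hsum2]
    have hgz := Fintype.linearIndependent_iff.mp hli g hg
    have hcz : ∀ k : Fin p, c k = 0 := by
      intro k
      have hk : g (idx k) = ∑ m ∈ Finset.range N,
          if (σ ^ m) (idx k) = idx k then c k else 0 := by
        refine Finset.sum_congr rfl fun m _ => ?_
        refine Finset.sum_eq_single k (fun b _ hb => if_neg (hdist b k hb m))
          (fun hk' => absurd (Finset.mem_univ k) hk')
      rw [hgz (idx k)] at hk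
      rw [← Finset.sum_filter, Finset.sum_const] at hk
      have hmem : (0 : ℕ) ∈ (Finset.range N).filter (fun m => (σ ^ m) (idx k) = idx k) := by
        simp [Finset.mem_filter, Finset.mem_range]
        omega
      have hcard : ((Finset.range N).filter (fun m => (σ ^ m) (idx k) = idx k)).card ≠ 0 := by
        intro h0
        rw [Finset.card_eq_zero] at h0
        rw [h0] at hmem
        exact absurd hmem (Finset.notMem_empty 0)
      have : (((Finset.range N).filter (fun m => (σ ^ m) (idx k) = idx k)).card : ℂ) * c k = 0 := by
        rw [← nsmul_eq_mul]; exact hk.symm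
      rcases mul_eq_zero.mp this with h' | h'
      · exact absurd (Nat.cast_eq_zero.mp h') hcard
      · exact h'
    have hS : (∑ j : Fin p, c j • αv (idx j)) = 0 := by simp [hcz]
    rw [hS, add_zero] at h
    have hinj : Function.Injective idx := by
      intro a b hab
      by_contra hne
      exact hdist a b hne 0 (by simpa using hab)
    refine ⟨h, ?_⟩
    have hfold : ((List.ofFn fun j : Fin p => s (idx j)).foldr (· ∘ ·) id) x = x := by
      rw [h] at hc
      rw [hc, hS, add_zero]
    exact fixed_of_fold_fixed_aux αv α hli s hs p idx hinj x hfold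
  · rintro ⟨h1, h2⟩
    rw [h1]
    exact fold_fixed_aux s p idx x h2
end

section
/- The fixed-point set of the twisted Coxeter element satisfies {x ∈ V : cox^τ(x) = x} = ℂ·c; in particular this fixed-point space is one-dimensional. -/
section Aux

variable {V : Type*} [AddCommGroup V] [Module ℂ V]
variable {I : Type*} [Fintype I]
variable (b : Module.Basis I ℂ V) (α : I → (V →ₗ[ℂ] ℂ)) (s : I → V → V)

/-- chain -/
def twChain (s : I → V → V) (L : List I) (v : V) : V :=
  (L.map s).foldr (· ∘ ·) id v

lemma twChain_nil (v : V) : twChain s [] v = v := rfl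

lemma twChain_cons (i : I) (L : List I) (v : V) :
    twChain s (i :: L) v = s i (twChain s L v) := rfl

lemma repr_twChain (hs : ∀ i x, s i x = x - α i x • b i) (L : List I) (v : V) (j : I) (hj : j ∉ L) :
    b.repr (twChain s L v) j = b.repr v j := by
  induction L with
  | nil => rfl
  | cons i L ih =>
    have hj1 : j ≠ i := fun h => hj (by rw [h]; exact List.mem_cons_self)
    have hj2 : j ∉ L := fun h => hj (List.mem_cons_of_mem i h)
    rw [twChain_cons, hs]
    simp [Finsupp.single_apply, Ne.symm hj1, ih hj2]

lemma twChain_fixed (hs : ∀ i x, s i x = x - α i x • b i) (L : List I) (v : V) (hv : ∀ i, α i v = 0) :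
    twChain s L v = v := by
  induction L with
  | nil => rfl
  | cons i L ih => rw [twChain_cons, ih, hs, hv, zero_smul, sub_zero]

lemma alpha_zero_of_twChain_fixed (hs : ∀ i x, s i x = x - α i x • b i) (L : List I) (hL : L.Nodup) (v : V)
    (h : twChain s L v = v) : ∀ i ∈ L, α i v = 0 := by
  induction L with
  | nil => intro i hi; simp at hi
  | cons i L ih =>
    have hiL : i ∉ L := (List.nodup_cons.mp hL).1
    have hLnd : L.Nodup := (List.nodup_cons.mp hL).2
    rw [twChain_cons, hs] at h
    have hcoef : α i (twChain s L v) = 0 := by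
      have h2 := congrArg (fun w => b.repr w i) h
      simp only [map_sub, map_smul, Finsupp.sub_apply, Finsupp.smul_apply,
        Module.Basis.repr_self, Finsupp.single_eq_same, smul_eq_mul, mul_one,
        repr_twChain b α s hs L v i hiL] at h2
      exact sub_eq_self.mp h2
    rw [hcoef, zero_smul, sub_zero] at h
    intro i' hi'
    rcases List.mem_cons.mp hi' with h1 | h2
    · rw [h1, ← h]; exact hcoef
    · exact ih hLnd h i' h2

end Aux

/-- Let `V` be a finite-dimensional complex vector space with basis `(α̌ᵢ)`,
`(αᵢ)` linear forms with `αᵢ(α̌ᵢ) = 2`, reflections `sᵢ(x) = x − αᵢ(x)·α̌ᵢ`, `σ` a permutation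
of `I`, `τ` a linear automorphism with `τ(α̌ᵢ) = α̌_{σ i}` and `α_{σ i} ∘ τ = αᵢ`, `τ^N = 1`,
`σ^N = 1`, `N ≥ 1`. Assume `c ≠ 0` satisfies `τ c = c`, `α_j c = 0` for all `j`, and
`⋂_j ker α_j = ℂ·c`. If `i₀, …, i_{s−1}` is a system of representatives of the `⟨σ⟩`-orbits
and `cox^τ = s_{i₀} ∘ ⋯ ∘ s_{i_{s−1}} ∘ τ`, then `{x | cox^τ x = x} = ℂ·c`; in particular the
fixed-point space is one-dimensional. -/
theorem twisted_coxeter_fixed_points_eq_center_line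
    {V : Type*} [AddCommGroup V] [Module ℂ V] [FiniteDimensional ℂ V]
    {I : Type*} [Fintype I]
    (b : Module.Basis I ℂ V) (α : I → (V →ₗ[ℂ] ℂ))
    (hpair : ∀ i, α i (b i) = 2)
    (s : I → V → V) (hs : ∀ i x, s i x = x - α i x • b i)
    (σ : Equiv.Perm I) (τ : V ≃ₗ[ℂ] V)
    (hτb : ∀ i, τ (b i) = b (σ i))
    (hτα : ∀ i (x : V), α (σ i) (τ x) = α i x)
    (N : ℕ) (hN : 1 ≤ N) (hτN : τ ^ N = 1) (hσN : σ ^ N = 1)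
    (c : V) (hc0 : c ≠ 0) (hτc : τ c = c) (hαc : ∀ j, α j c = 0)
    (hker : {x : V | ∀ j, α j x = 0} = {x : V | ∃ a : ℂ, x = a • c})
    (sN : ℕ) (idx : Fin sN → I)
    (hrep : ∀ i : I, ∃! j : Fin sN, ∃ n : ℕ, (σ ^ n) (idx j) = i) :
    {x : V | ((List.ofFn fun j : Fin sN => s (idx j)).foldr (· ∘ ·) id) (τ x) = x} =
      {x : V | ∃ a : ℂ, x = a • c} := by
  classical
  set L : List I := List.ofFn idx with hL
  have hFold : ∀ v : V,
      ((List.ofFn fun j : Fin sN => s (idx j)).foldr (· ∘ ·) id) v = twChain s L v := by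
    intro v
    have : (List.ofFn fun j : Fin sN => s (idx j)) = L.map s := by
      rw [hL, List.map_ofFn]; rfl
    rw [this]; rfl
  -- idx is injective
  have hinj : Function.Injective idx := by
    intro m k h
    obtain ⟨j0, _, hu⟩ := hrep (idx k)
    have h1 : m = j0 := hu m ⟨0, by simp [h]⟩
    have h2 : k = j0 := hu k ⟨0, by simp⟩
    rw [h1, h2]
  have hnd : L.Nodup := List.nodup_ofFn.mpr hinj
  have hmemL : ∀ j : I, j ∈ L ↔ ∃ m, idx m = j := by
    intro j; rw [hL, List.mem_ofFn]
  -- τ^n on basis vectors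
  have hτpow : ∀ (n : ℕ) (j : I), (τ ^ n) (b j) = b ((σ ^ n) j) := by
    intro n
    induction n with
    | zero => intro j; simp
    | succ n ih =>
      intro j
      have h1 : (τ ^ (n+1)) (b j) = (τ ^ n) (τ (b j)) := by
        rw [pow_succ]; rfl
      have h2 : (σ ^ (n+1)) j = (σ ^ n) (σ j) := by
        rw [pow_succ]; rfl
      rw [h1, hτb, ih, h2]
  ext x
  simp only [Set.mem_setOf_eq, hFold]
  constructor
  · intro hx
    -- coefficients of τ x - x
    set d : I → ℂ := fun j => b.repr (τ x - x) j with hd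
    have hd_supp : ∀ j : I, j ∉ L → d j = 0 := by
      intro j hj
      have h1 : b.repr (twChain s L (τ x)) j = b.repr (τ x) j :=
        repr_twChain b α s hs L (τ x) j hj
      rw [hx] at h1
      simp [hd, map_sub, h1]
    have hy : τ x - x = ∑ j, d j • b j := by
      rw [hd]; exact (b.sum_repr (τ x - x)).symm
    -- telescoping
    have htel : ∑ n ∈ Finset.range N, (τ ^ n) (τ x - x) = 0 := by
      have : ∀ n : ℕ, (τ ^ n) (τ x - x) = (τ ^ (n + 1)) x - (τ ^ n) x := by
        intro n
        rw [map_sub, pow_succ]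
        rfl
      calc ∑ n ∈ Finset.range N, (τ ^ n) (τ x - x)
          = ∑ n ∈ Finset.range N, ((τ ^ (n+1)) x - (τ ^ n) x) := by
            exact Finset.sum_congr rfl fun n _ => this n
        _ = (τ ^ N) x - (τ ^ 0) x := Finset.sum_range_sub (fun n => (τ ^ n) x) N
        _ = 0 := by rw [hτN, pow_zero]; simp
    have key : ∀ k : Fin sN, d (idx k) = 0 := by
      intro k
      have h0 : ∑ n ∈ Finset.range N, b.coord (idx k) ((τ ^ n) (τ x - x)) = 0 := by
        rw [← map_sum, htel, map_zero]
      have hterm : ∀ n ∈ Finset.range N,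
          b.coord (idx k) ((τ ^ n) (τ x - x))
            = ∑ j, d j * (if (σ ^ n) j = idx k then 1 else 0) := by
        intro n _
        rw [hy, map_sum, map_sum]
        refine Finset.sum_congr rfl fun j _ => ?_
        rw [map_smul, hτpow n j, map_smul]
        simp [Module.Basis.coord_apply, Module.Basis.repr_self, Finsupp.single_apply]
      rw [Finset.sum_congr rfl hterm, Finset.sum_comm] at h0
      have hswap : ∀ j : I,
          ∑ n ∈ Finset.range N, d j * (if (σ ^ n) j = idx k then 1 else 0)
            = d j * ∑ n ∈ Finset.range N, (if (σ ^ n) j = idx k then (1:ℂ) else 0) := by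
        intro j; rw [Finset.mul_sum]
      rw [Finset.sum_congr rfl (fun j _ => hswap j)] at h0
      have hsingle : ∑ j : I, d j * ∑ n ∈ Finset.range N,
            (if (σ ^ n) j = idx k then (1:ℂ) else 0)
          = d (idx k) * ∑ n ∈ Finset.range N,
            (if (σ ^ n) (idx k) = idx k then (1:ℂ) else 0) := by
        apply Finset.sum_eq_single
        · intro j _ hjne
          by_cases hdj : d j = 0
          · rw [hdj, zero_mul]
          · have hjL : j ∈ L := by
              by_contra hc; exact hdj (hd_supp j hc)
            obtain ⟨m, hm⟩ := (hmemL j).mp hjL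
            have hz : ∀ n ∈ Finset.range N, (if (σ ^ n) j = idx k then (1:ℂ) else 0) = 0 := by
              intro n _
              rw [if_neg]
              intro hEq
              obtain ⟨j0, _, hu⟩ := hrep (idx k)
              have h1 : m = j0 := hu m ⟨n, by rw [hm]; exact hEq⟩
              have h2 : k = j0 := hu k ⟨0, by simp⟩
              exact hjne (by rw [← hm, h1, ← h2])
            rw [Finset.sum_eq_zero hz, mul_zero]
        · intro h; exact absurd (Finset.mem_univ (idx k)) h
      rw [hsingle] at h0
      have hScard : ∑ n ∈ Finset.range N, (if (σ ^ n) (idx k) = idx k then (1:ℂ) else 0)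
          = ((Finset.range N).filter (fun n => (σ ^ n) (idx k) = idx k)).card := by
        rw [Finset.sum_boole]
      have hhaszero : 0 ∈ (Finset.range N).filter (fun n => (σ ^ n) (idx k) = idx k) := by
        simp [Finset.mem_filter, Finset.mem_range]
        omega
      have hScard_ne : ((Finset.range N).filter (fun n => (σ ^ n) (idx k) = idx k)).card ≠ 0 :=
        Finset.card_ne_zero_of_mem hhaszero
      have hSne : ∑ n ∈ Finset.range N, (if (σ ^ n) (idx k) = idx k then (1:ℂ) else 0) ≠ 0 := by
        rw [hScard]
        exact_mod_cast Nat.cast_ne_zero.mpr hScard_ne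
      exact (mul_eq_zero.mp h0).resolve_right hSne
    have hdall : ∀ j : I, d j = 0 := by
      intro j
      by_cases hjL : j ∈ L
      · obtain ⟨m, hm⟩ := (hmemL j).mp hjL
        rw [← hm]; exact key m
      · exact hd_supp j hjL
    have hτx : τ x = x := by
      have : τ x - x = 0 := by
        rw [hy]
        exact Finset.sum_eq_zero fun j _ => by rw [hdall j, zero_smul]
      exact sub_eq_zero.mp this
    rw [hτx] at hx
    have hαL : ∀ i ∈ L, α i x = 0 := alpha_zero_of_twChain_fixed b α s hs L hnd x hx
    have hpowα : ∀ (n : ℕ) (i : I), α ((σ ^ n) i) x = α i x := by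
      intro n
      induction n with
      | zero => intro i; simp
      | succ n ih =>
        intro i
        have h1 : (σ ^ (n+1)) i = σ ((σ ^ n) i) := by
          rw [pow_succ']; rfl
        have h2 := hτα ((σ ^ n) i) x
        rw [hτx] at h2
        rw [h1, h2, ih i]
    have hall : ∀ j : I, α j x = 0 := by
      intro j
      obtain ⟨m, ⟨n, hn⟩, _⟩ := hrep j
      rw [← hn, hpowα n (idx m)]
      exact hαL (idx m) ((hmemL (idx m)).mpr ⟨m, rfl⟩)
    have : x ∈ {x : V | ∀ j, α j x = 0} := hall
    rwa [hker] at this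
  · rintro ⟨a, rfl⟩
    have h1 : τ (a • c) = a • c := by rw [map_smul, hτc]
    rw [h1]
    exact twChain_fixed b α s hs L (a • c) fun i => by
      rw [map_smul]; simp [hαc i]
end
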